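/- arXiv:2211.05964 — 4 statements merged into one kernel-verified Lean document; each statement's English description precedes it below -/
import Mathlib

section
/- Let A be a d×d real symmetric positive semidefinite matrix, let s ∈ {1,…,d}, let ε ∈ (0,1), and let N be a finite subset of S₀^{d−1}(s) such that for every v ∈ S₀^{d−1}(s) there exists u ∈ N with ‖v − u‖₂ ≤ ε and ‖v − u‖₀ ≤ s. Then φ_min(s;A) ≥ min_{u∈N} uᵀAu − 3ε·φ_max(s;A). -/
open Real

/-- Number of nonzero coordinates (ℓ₀ "norm"). -/
noncomputable def l0norm {d : ℕ} (v : Fin d → ℝ) : ℕ := {j | v j ≠ 0}.ncard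

/-- Euclidean (ℓ₂) norm. -/
noncomputable def l2norm {d : ℕ} (v : Fin d → ℝ) : ℝ := Real.sqrt (∑ j, (v j) ^ 2)

/-- Quadratic form vᵀ A v. -/
noncomputable def quadForm {d : ℕ} (A : Matrix (Fin d) (Fin d) ℝ) (v : Fin d → ℝ) : ℝ :=
  dotProduct v (A.mulVec v)

/-- Minimum sparse eigenvalue φ_min(s; A). -/
noncomputable def phiMin {d : ℕ} (s : ℕ) (A : Matrix (Fin d) (Fin d) ℝ) : ℝ :=
  sInf ((fun v => quadForm A v / (l2norm v) ^ 2) '' {v : Fin d → ℝ | v ≠ 0 ∧ l0norm v ≤ s})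

/-- Maximum sparse eigenvalue φ_max(s; A). -/
noncomputable def phiMax {d : ℕ} (s : ℕ) (A : Matrix (Fin d) (Fin d) ℝ) : ℝ :=
  sSup ((fun v => quadForm A v / (l2norm v) ^ 2) '' {v : Fin d → ℝ | v ≠ 0 ∧ l0norm v ≤ s})

/-- The sparse unit sphere S₀^{d-1}(s). -/
def sparseSphere (d s : ℕ) : Set (Fin d → ℝ) := {v | l2norm v = 1 ∧ l0norm v ≤ s}

/-!
Normalise a nonzero `s`-sparse `v` to `v'` on the sparse sphere and pick `u ∈ N` with
`w = v' - u` of norm at most `ε` and `s`-sparse. Then `v'ᵀAv' = uᵀAu + 2 uᵀAw + wᵀAw` with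
`wᵀAw ≥ 0`, and Cauchy–Schwarz for the positive semidefinite form gives
`|uᵀAw| ≤ √(uᵀAu · wᵀAw) ≤ √(φ_max · φ_max ‖w‖²) ≤ ε φ_max`,
so `v'ᵀAv' ≥ min_N uᵀAu - 2ε φ_max`.
-/

open Matrix WithLp

section Norms

variable {d : ℕ}

lemma l2norm_eq_norm (v : Fin d → ℝ) : l2norm v = ‖toLp 2 v‖ := by
  simp [l2norm, EuclideanSpace.norm_eq]

lemma l2norm_nonneg (v : Fin d → ℝ) : 0 ≤ l2norm v := Real.sqrt_nonneg _

lemma l2norm_smul (c : ℝ) (v : Fin d → ℝ) : l2norm (c • v) = |c| * l2norm v := by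
  simp only [l2norm_eq_norm, toLp_smul, norm_smul, Real.norm_eq_abs]

lemma l2norm_eq_zero {v : Fin d → ℝ} : l2norm v = 0 ↔ v = 0 := by
  rw [l2norm_eq_norm, norm_eq_zero, toLp_eq_zero]

lemma l0norm_smul_le (c : ℝ) (v : Fin d → ℝ) : l0norm (c • v) ≤ l0norm v :=
  Set.ncard_le_ncard (fun _ hj => right_ne_zero_of_mul hj) (Set.toFinite _)

lemma l2norm_pos {v : Fin d → ℝ} (hv : v ≠ 0) : 0 < l2norm v :=
  (l2norm_nonneg v).lt_of_ne' (l2norm_eq_zero.not.mpr hv)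

lemma sparseSphere_subset (s : ℕ) : sparseSphere d s ⊆ {v | v ≠ 0 ∧ l0norm v ≤ s} :=
  fun v hv => ⟨fun h => by simpa [h, l2norm_eq_zero.mpr rfl] using hv.1, hv.2⟩

lemma inv_l2norm_smul_mem_sparseSphere {s : ℕ} {v : Fin d → ℝ} (hv0 : v ≠ 0)
    (hvs : l0norm v ≤ s) : (l2norm v)⁻¹ • v ∈ sparseSphere d s := by
  have hpos := l2norm_pos hv0
  refine ⟨?_, (l0norm_smul_le _ v).trans hvs⟩
  rw [l2norm_smul, abs_of_pos (inv_pos.mpr hpos), inv_mul_cancel₀ hpos.ne']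

end Norms

lemma Matrix.IsSymm.dotProduct_mulVec_comm {n R : Type*} [Fintype n] [CommSemiring R]
    {A : Matrix n n R} (hA : A.IsSymm) (u w : n → R) : w ⬝ᵥ A *ᵥ u = u ⬝ᵥ A *ᵥ w := by
  rw [dotProduct_mulVec, ← mulVec_transpose, hA.eq, dotProduct_comm]

section QuadForm

variable {d : ℕ} {A : Matrix (Fin d) (Fin d) ℝ}

lemma quadForm_smul (A : Matrix (Fin d) (Fin d) ℝ) (c : ℝ) (v : Fin d → ℝ) :
    quadForm A (c • v) = c ^ 2 * quadForm A v := by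
  simp only [quadForm, mulVec_smul, dotProduct_smul, smul_dotProduct, smul_eq_mul]
  ring

lemma quadForm_div_l2norm_sq (A : Matrix (Fin d) (Fin d) ℝ) (v : Fin d → ℝ) :
    quadForm A v / l2norm v ^ 2 = quadForm A ((l2norm v)⁻¹ • v) := by
  rw [quadForm_smul, inv_pow, inv_mul_eq_div]

lemma quadForm_add (hA : A.IsSymm) (u w : Fin d → ℝ) :
    quadForm A (u + w) = quadForm A u + 2 * (u ⬝ᵥ A *ᵥ w) + quadForm A w := by
  simp only [quadForm, mulVec_add, dotProduct_add, add_dotProduct, hA.dotProduct_mulVec_comm u w]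
  ring

lemma quadForm_le_norm_mul_l2norm_sq (A : Matrix (Fin d) (Fin d) ℝ) (v : Fin d → ℝ) :
    quadForm A v ≤ ‖toEuclideanCLM (𝕜 := ℝ) A‖ * l2norm v ^ 2 := by
  set T := toEuclideanCLM (𝕜 := ℝ) A
  calc quadForm A v = inner ℝ (toLp 2 v) (T (toLp 2 v)) := (inner_toEuclideanCLM A _ _).symm
    _ ≤ ‖toLp 2 v‖ * ‖T (toLp 2 v)‖ := real_inner_le_norm _ _
    _ ≤ ‖toLp 2 v‖ * (‖T‖ * ‖toLp 2 v‖) := by gcongr; exact T.le_opNorm _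
    _ = ‖T‖ * l2norm v ^ 2 := by rw [l2norm_eq_norm]; ring

lemma Matrix.PosSemidef.quadForm_nonneg (hA : A.PosSemidef) (v : Fin d → ℝ) :
    0 ≤ quadForm A v := by
  simpa [quadForm] using hA.dotProduct_mulVec_nonneg v

lemma Matrix.PosSemidef.sq_dotProduct_mulVec_le (hA : A.PosSemidef) (u w : Fin d → ℝ) :
    (u ⬝ᵥ A *ᵥ w) ^ 2 ≤ quadForm A u * quadForm A w := by
  have h := (toBilin' A).apply_mul_apply_le_of_forall_zero_le
    (fun x => by rw [toBilin'_apply']; exact hA.quadForm_nonneg x) u w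
  rwa [toBilin'_apply', toBilin'_apply', toBilin'_apply', toBilin'_apply',
    (isHermitian_iff_isSymm.mp hA.isHermitian).dotProduct_mulVec_comm u w, ← sq] at h

end QuadForm

section PhiMax

variable {d : ℕ} {A : Matrix (Fin d) (Fin d) ℝ}

lemma bddAbove_rayleigh (s : ℕ) (A : Matrix (Fin d) (Fin d) ℝ) :
    BddAbove ((fun v => quadForm A v / l2norm v ^ 2) '' {v | v ≠ 0 ∧ l0norm v ≤ s}) := by
  refine ⟨‖toEuclideanCLM (𝕜 := ℝ) A‖, ?_⟩
  rintro _ ⟨v, -, rfl⟩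
  exact div_le_of_le_mul₀ (sq_nonneg _) (norm_nonneg _) (quadForm_le_norm_mul_l2norm_sq A v)

lemma quadForm_le_phiMax_mul (A : Matrix (Fin d) (Fin d) ℝ) {s : ℕ} {v : Fin d → ℝ}
    (hv : l0norm v ≤ s) :
    quadForm A v ≤ phiMax s A * l2norm v ^ 2 := by
  rcases eq_or_ne v 0 with rfl | hv0
  · simp [quadForm, l2norm]
  rw [← div_le_iff₀ (pow_pos (l2norm_pos hv0) 2)]
  exact le_csSup (bddAbove_rayleigh s A) ⟨v, ⟨hv0, hv⟩, rfl⟩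

lemma quadForm_le_phiMax (A : Matrix (Fin d) (Fin d) ℝ) {s : ℕ} {u : Fin d → ℝ}
    (hu : u ∈ sparseSphere d s) :
    quadForm A u ≤ phiMax s A := by
  simpa [hu.1] using quadForm_le_phiMax_mul A hu.2

lemma Matrix.PosSemidef.phiMax_nonneg (hA : A.PosSemidef) (s : ℕ) : 0 ≤ phiMax s A := by
  refine Real.sSup_nonneg fun _ ⟨v, _, hv⟩ => hv ▸ ?_
  exact div_nonneg (hA.quadForm_nonneg v) (sq_nonneg _)

end PhiMax

lemma quadForm_sub_le_quadForm_add {d s : ℕ} {A : Matrix (Fin d) (Fin d) ℝ} (hA : A.PosSemidef)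
    {u w : Fin d → ℝ} (hu : u ∈ sparseSphere d s) (hw : l0norm w ≤ s) :
    quadForm A u - 2 * (l2norm w * phiMax s A) ≤ quadForm A (u + w) := by
  have hφ := hA.phiMax_nonneg s
  have hcross : (u ⬝ᵥ A *ᵥ w) ^ 2 ≤ (l2norm w * phiMax s A) ^ 2 := calc
    _ ≤ quadForm A u * quadForm A w := hA.sq_dotProduct_mulVec_le u w
    _ ≤ phiMax s A * (phiMax s A * l2norm w ^ 2) :=
      mul_le_mul (quadForm_le_phiMax A hu) (quadForm_le_phiMax_mul A hw) (hA.quadForm_nonneg w) hφ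
    _ = (l2norm w * phiMax s A) ^ 2 := by ring
  have hlower := (abs_le_of_sq_le_sq' hcross (mul_nonneg (l2norm_nonneg w) hφ)).1
  rw [quadForm_add (isHermitian_iff_isSymm.mp hA.isHermitian)]
  linarith [hA.quadForm_nonneg w]

theorem min_sparse_eigen_on_net_general {d : ℕ} (s : ℕ)
    (A : Matrix (Fin d) (Fin d) ℝ) (hA : A.PosSemidef)
    (ε : ℝ)
    (N : Finset (Fin d → ℝ)) (hNsub : ↑N ⊆ sparseSphere d s)
    (hnet : ∀ v ∈ sparseSphere d s, ∃ u ∈ N, l2norm (v - u) ≤ ε ∧ l0norm (v - u) ≤ s) :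
    sInf ((fun u => quadForm A u) '' ↑N) - 3 * ε * phiMax s A ≤ phiMin s A := by
  rcases ((fun v => quadForm A v / l2norm v ^ 2) ''
    {v : Fin d → ℝ | v ≠ 0 ∧ l0norm v ≤ s}).eq_empty_or_nonempty with hS | hS
  · -- there is no nonzero `s`-sparse vector, so `N = ∅` and all three sInf/sSup are `0`
    have hN : (N : Set (Fin d → ℝ)) = ∅ := Set.eq_empty_of_forall_notMem fun u hu =>
      (Set.image_eq_empty.mp hS).subset (sparseSphere_subset s (hNsub hu))
    simp [phiMin, phiMax, hS, hN]
  refine le_csInf hS ?_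
  rintro _ ⟨v, ⟨hv0, hvs⟩, rfl⟩
  obtain ⟨u, huN, hwε, hws⟩ := hnet _ (inv_l2norm_smul_mem_sparseSphere hv0 hvs)
  have hinf : sInf ((fun u => quadForm A u) '' ↑N) ≤ quadForm A u :=
    csInf_le (N.finite_toSet.image _).bddBelow ⟨u, huN, rfl⟩
  have hpert := quadForm_sub_le_quadForm_add hA (hNsub huN) hws
  have hφ := hA.phiMax_nonneg s
  have hwφ := mul_le_mul_of_nonneg_right hwε hφ
  have hεφ := (mul_nonneg (l2norm_nonneg _) hφ).trans hwφ
  rw [add_sub_cancel] at hpert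
  simp only [quadForm_div_l2norm_sq]
  linarith

/-- minimum sparse eigenvalue is controlled from below on a greedy ε-net. -/
theorem min_sparse_eigen_on_net {d : ℕ} (s : ℕ) (hs1 : 1 ≤ s) (hsd : s ≤ d)
    (A : Matrix (Fin d) (Fin d) ℝ) (hA : A.PosSemidef)
    (ε : ℝ) (hε0 : 0 < ε) (hε1 : ε < 1)
    (N : Finset (Fin d → ℝ)) (hNsub : ↑N ⊆ sparseSphere d s)
    (hnet : ∀ v ∈ sparseSphere d s, ∃ u ∈ N, l2norm (v - u) ≤ ε ∧ l0norm (v - u) ≤ s) :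
    sInf ((fun u => quadForm A u) '' ↑N) - 3 * ε * phiMax s A ≤ phiMin s A :=
  min_sparse_eigen_on_net_general s A hA ε N hNsub hnet
end

section
/- (Transfer lemma.) Let Σ̂ and Σ be d×d real symmetric positive semidefinite matrices, let η ∈ (0,1), and let m ∈ {2,…,d} be such that vᵀΣ̂v ≥ (1−η)·vᵀΣv for every v ∈ ℝ^d with at most m nonzero coordinates. Let D be a diagonal d×d matrix with nonnegative diagonal entries satisfying D_{jj} ≥ Σ̂_{jj} − (1−η)Σ_{jj} for every j. Then for every x ∈ ℝ^d, xᵀΣ̂x ≥ (1−η)·xᵀΣx − ‖D^{1/2}x‖₁²/(m−1), where D^{1/2} is the diagonal matrix with entries √(D_{jj}) and ‖·‖₁ is the ℓ₁ norm. -/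
/-! Put `A = Σ̂ - (1 - η) Σ`, so that `vᵀ A v ≥ 0` for `m`-sparse `v` and `A j j ≤ D j`. Given a
probability vector `p` with `x j = 0` wherever `p j = 0`, draw `m` indices `t₁, …, tₘ`
independently from `p` and form the `m`-sparse vector `v = ∑ᵢ (x tᵢ / p tᵢ) e_{tᵢ}`. Then
`E[vᵀ A v] = m ∑ⱼ x j ^ 2 / p j * A j j + m (m - 1) xᵀ A x ≥ 0`. The choice `p j ∝ √(D j) |x j|`
bounds the diagonal sum by `‖D^{1/2} x‖₁²`; when some `D j` vanish, run this with `D + ε` and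
let `ε → 0`. -/

open Real

open Finset

section Sampling

variable {ι κ : Type*} [Fintype ι] [Fintype κ] [DecidableEq κ] {p : ι → ℝ}

-- The weighted sum over `t : κ → ι` is the expectation over `|κ|` independent draws from `p`.
theorem sum_prod_mul_prod (f : κ → ι → ℝ) :
    ∑ t : κ → ι, (∏ k, p (t k)) * ∏ k, f k (t k) = ∏ k, ∑ a, p a * f k a := by
  simp_rw [Fintype.prod_sum, ← prod_mul_distrib]

theorem sum_prod_mul_apply (hp : ∑ a, p a = 1) (i : κ) (f : ι → ℝ) :
    ∑ t : κ → ι, (∏ k, p (t k)) * f (t i) = ∑ a, p a * f a := by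
  have key := sum_prod_mul_prod (p := p) (fun k => if k = i then f else 1)
  rw [Fintype.prod_eq_single i (fun k hk => by simp [hk, hp]),
    sum_congr rfl fun t _ => congrArg _ (Fintype.prod_eq_single i fun k hk => by simp [hk])] at key
  simpa using key

theorem sum_prod_mul_apply_mul_apply (hp : ∑ a, p a = 1) {i j : κ} (hij : i ≠ j)
    (f g : ι → ℝ) :
    ∑ t : κ → ι, (∏ k, p (t k)) * (f (t i) * g (t j)) =
      (∑ a, p a * f a) * ∑ a, p a * g a := by
  have key := sum_prod_mul_prod (p := p) (fun k => if k = i then f else if k = j then g else 1)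
  rw [Fintype.prod_eq_mul i j hij (fun k hk => by simp [hk, hp]),
    sum_congr rfl fun t _ => congrArg _ (Fintype.prod_eq_mul i j hij fun k hk => by simp [hk])]
    at key
  simpa [hij.symm] using key

theorem sum_prod_mul_sum_mul_sum (hp : ∑ a, p a = 1) (f g : ι → ℝ) :
    ∑ t : κ → ι, (∏ k, p (t k)) * ((∑ i, f (t i)) * ∑ j, g (t j)) =
      Fintype.card κ * ∑ a, p a * (f a * g a) +
        Fintype.card κ * (Fintype.card κ - 1) * ((∑ a, p a * f a) * ∑ a, p a * g a) := by
  set S := ∑ a, p a * (f a * g a)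
  set T := (∑ a, p a * f a) * ∑ a, p a * g a
  have hterm : ∀ i j : κ, ∑ t : κ → ι, (∏ k, p (t k)) * (f (t i) * g (t j)) =
      T + if i = j then S - T else 0 := by
    intro i j
    split_ifs with hij
    · subst hij
      rw [sum_prod_mul_apply hp i fun a => f a * g a]
      ring
    · rw [sum_prod_mul_apply_mul_apply hp hij, add_zero]
  simp_rw [sum_mul_sum, mul_sum]
  rw [sum_comm]
  simp only [sum_comm (γ := κ → ι), hterm, sum_add_distrib, sum_ite_eq, sum_const, card_univ,
    nsmul_eq_mul, mem_univ, if_true]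
  ring

end Sampling

theorem quadForm_eq_sum {d : ℕ} (A : Matrix (Fin d) (Fin d) ℝ) (v : Fin d → ℝ) :
    quadForm A v = ∑ a, ∑ b, A a b * (v a * v b) := by
  simp only [quadForm, dotProduct, Matrix.mulVec, mul_sum]
  exact sum_congr rfl fun a _ => sum_congr rfl fun b _ => by ring

theorem quadForm_sub_smul {d : ℕ} (A B : Matrix (Fin d) (Fin d) ℝ) (c : ℝ) (v : Fin d → ℝ) :
    quadForm (A - c • B) v = quadForm A v - c * quadForm B v := by
  simp [quadForm, Matrix.sub_mulVec, Matrix.smul_mulVec, dotProduct_sub, dotProduct_smul]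

theorem l0norm_sum_single_le {d : ℕ} {κ : Type*} [Fintype κ] (t : κ → Fin d) (y : κ → ℝ) :
    l0norm (∑ k, Pi.single (t k) (y k)) ≤ Fintype.card κ := by
  have hsupp : {j | (∑ k, Pi.single (t k) (y k) : Fin d → ℝ) j ≠ 0} ⊆ Set.range t := by
    intro j hj
    by_contra hjt
    refine hj ((Finset.sum_apply j _ _).trans (sum_eq_zero fun k _ => ?_))
    exact Pi.single_eq_of_ne (fun h => hjt ⟨k, h.symm⟩) _
  calc l0norm (∑ k, Pi.single (t k) (y k)) ≤ (Set.range t).ncard := Set.ncard_le_ncard hsupp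
    _ ≤ (Set.univ : Set κ).ncard := by
      rw [← Set.image_univ]; exact Set.ncard_image_le (Set.toFinite _)
    _ = Fintype.card κ := by rw [Set.ncard_univ, Nat.card_eq_fintype_card]

section SingleDiv

variable {ι : Type*} [Fintype ι] [DecidableEq ι] {p x : ι → ℝ}

theorem sum_mul_single_div_apply (hx : ∀ a, p a = 0 → x a = 0) (a : ι) :
    ∑ e, p e * (Pi.single e (x e / p e) : ι → ℝ) a = x a := by
  simp only [Pi.single_apply, mul_ite, mul_zero, sum_ite_eq, mem_univ, if_true]
  by_cases ha : p a = 0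
  · simp [ha, hx a ha]
  · exact mul_div_cancel₀ _ ha

theorem sum_mul_single_div_apply_mul_apply (a b : ι) :
    ∑ e, p e * ((Pi.single e (x e / p e) : ι → ℝ) a * (Pi.single e (x e / p e) : ι → ℝ) b) =
      if a = b then x a ^ 2 / p a else 0 := by
  split_ifs with hab
  · subst hab
    simp only [Pi.single_apply, ite_mul, mul_ite, mul_zero, zero_mul, if_true, sum_ite_eq,
      mem_univ]
    by_cases ha : p a = 0
    · simp [ha]
    · field_simp
  · refine sum_eq_zero fun e _ => ?_
    simp only [Pi.single_apply]
    split_ifs <;> simp_all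

end SingleDiv

theorem sum_prod_mul_quadForm_sum_single {d m : ℕ} (A : Matrix (Fin d) (Fin d) ℝ)
    {p x : Fin d → ℝ} (hp1 : ∑ a, p a = 1) (hx : ∀ a, p a = 0 → x a = 0) :
    ∑ t : Fin m → Fin d, (∏ k, p (t k)) * quadForm A (∑ i, Pi.single (t i) (x (t i) / p (t i))) =
      m * (∑ a, x a ^ 2 / p a * A a a + ((m : ℝ) - 1) * quadForm A x) := by
  set w : Fin d → Fin d → ℝ := fun e => Pi.single e (x e / p e)
  have hentry : ∀ a b,
      ∑ t : Fin m → Fin d, (∏ k, p (t k)) * ((∑ i, w (t i) a) * ∑ j, w (t j) b) =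
        m * (if a = b then x a ^ 2 / p a else 0) + m * ((m : ℝ) - 1) * (x a * x b) := by
    intro a b
    rw [sum_prod_mul_sum_mul_sum hp1 (fun e => w e a) (fun e => w e b),
      sum_mul_single_div_apply_mul_apply, sum_mul_single_div_apply hx,
      sum_mul_single_div_apply hx, Fintype.card_fin]
  calc ∑ t : Fin m → Fin d, (∏ k, p (t k)) * quadForm A (∑ i, w (t i))
      = ∑ t : Fin m → Fin d, ∑ a, ∑ b,
          A a b * ((∏ k, p (t k)) * ((∑ i, w (t i) a) * ∑ j, w (t j) b)) := by
        refine sum_congr rfl fun t _ => ?_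
        rw [quadForm_eq_sum, mul_sum]
        refine sum_congr rfl fun a _ => ?_
        rw [mul_sum]
        refine sum_congr rfl fun b _ => ?_
        simp only [Finset.sum_apply]
        ring
    _ = ∑ a, ∑ b, A a b * ∑ t : Fin m → Fin d,
          (∏ k, p (t k)) * ((∑ i, w (t i) a) * ∑ j, w (t j) b) := by
        rw [sum_comm]
        refine sum_congr rfl fun a _ => ?_
        rw [sum_comm]
        exact sum_congr rfl fun b _ => (mul_sum _ _ _).symm
    _ = ∑ a, ∑ b, A a b * (m * (if a = b then x a ^ 2 / p a else 0) +
          m * ((m : ℝ) - 1) * (x a * x b)) := by simp only [hentry]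
    _ = m * (∑ a, x a ^ 2 / p a * A a a + ((m : ℝ) - 1) * quadForm A x) := by
        simp only [mul_add, sum_add_distrib, mul_ite, mul_zero, sum_ite_eq, mem_univ, if_true,
          quadForm_eq_sum, mul_sum]
        congr 1
        · exact sum_congr rfl fun a _ => by ring
        · exact sum_congr rfl fun a _ => sum_congr rfl fun b _ => by ring

def SparsePosSemidef {d : ℕ} (m : ℕ) (A : Matrix (Fin d) (Fin d) ℝ) : Prop :=
  ∀ v : Fin d → ℝ, l0norm v ≤ m → 0 ≤ quadForm A v

namespace SparsePosSemidef

variable {d m : ℕ} {A : Matrix (Fin d) (Fin d) ℝ}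

-- Where `p a = 0` also `x a = 0`, and the junk value `x a ^ 2 / 0 = 0` is the right term.
theorem neg_sum_le_mul_quadForm (hA : SparsePosSemidef m A) (hm : 0 < m) {p x : Fin d → ℝ}
    (hp0 : ∀ a, 0 ≤ p a) (hp1 : ∑ a, p a = 1) (hx : ∀ a, p a = 0 → x a = 0) :
    -∑ a, x a ^ 2 / p a * A a a ≤ ((m : ℝ) - 1) * quadForm A x := by
  have hnonneg : 0 ≤ ∑ t : Fin m → Fin d,
      (∏ k, p (t k)) * quadForm A (∑ i, Pi.single (t i) (x (t i) / p (t i))) :=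
    sum_nonneg fun t _ => mul_nonneg (prod_nonneg fun k _ => hp0 _)
      (hA _ ((l0norm_sum_single_le t _).trans (by simp)))
  rw [sum_prod_mul_quadForm_sum_single A hp1 hx] at hnonneg
  have hcombined := nonneg_of_mul_nonneg_right hnonneg (by exact_mod_cast hm)
  linarith

theorem neg_sq_sum_le_mul_quadForm (hA : SparsePosSemidef m A) (hm : 0 < m) {w : Fin d → ℝ}
    (hw : ∀ j, 0 < w j) (hAw : ∀ j, A j j ≤ w j ^ 2) (x : Fin d → ℝ) :
    -(∑ j, w j * |x j|) ^ 2 ≤ ((m : ℝ) - 1) * quadForm A x := by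
  set L := ∑ j, w j * |x j|
  have hterm : ∀ j, 0 ≤ w j * |x j| := fun j => mul_nonneg (hw j).le (abs_nonneg _)
  rcases (sum_nonneg fun j _ => hterm j : 0 ≤ L).eq_or_lt with hL | hL
  · have hx : x = 0 := funext fun j => by
      have := (sum_eq_zero_iff_of_nonneg fun j _ => hterm j).1 hL.symm j (mem_univ j)
      simpa [(hw j).ne'] using this
    simpa [hx, quadForm] using sq_nonneg L
  set p : Fin d → ℝ := fun j => w j * |x j| / L
  have hpx : ∀ j, p j = 0 → x j = 0 := fun j hj => by
    simpa [(hw j).ne'] using (div_eq_zero_iff.1 hj).resolve_right hL.ne'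
  have hp1 : ∑ j, p j = 1 := by rw [← sum_div, div_self hL.ne']
  have hdiag : ∀ j, x j ^ 2 / p j * A j j ≤ L * (w j * |x j|) := fun j => by
    by_cases hxj : x j = 0
    · simp [hxj]
    calc x j ^ 2 / p j * A j j ≤ x j ^ 2 / p j * w j ^ 2 :=
          mul_le_mul_of_nonneg_left (hAw j) (div_nonneg (sq_nonneg _) (div_nonneg (hterm j) hL.le))
      _ = L * (w j * |x j|) := by
          simp only [p, ← sq_abs (x j)]
          field_simp [(hw j).ne', abs_pos.2 hxj]
  have hcore := hA.neg_sum_le_mul_quadForm hm (p := p) (fun j => div_nonneg (hterm j) hL.le) hp1 hpx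
  have hsum : ∑ j, x j ^ 2 / p j * A j j ≤ L ^ 2 := by
    calc ∑ j, x j ^ 2 / p j * A j j ≤ ∑ j, L * (w j * |x j|) := sum_le_sum fun j _ => hdiag j
      _ = L ^ 2 := by rw [← mul_sum, sq]
  linarith

theorem neg_sq_sum_sqrt_le_mul_quadForm (hA : SparsePosSemidef m A) (hm : 0 < m) {D : Fin d → ℝ}
    (hD0 : ∀ j, 0 ≤ D j) (hAD : ∀ j, A j j ≤ D j) (x : Fin d → ℝ) :
    -(∑ j, √(D j) * |x j|) ^ 2 ≤ ((m : ℝ) - 1) * quadForm A x := by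
  have hpos : ∀ ε > 0, -(∑ j, √(D j + ε) * |x j|) ^ 2 ≤ ((m : ℝ) - 1) * quadForm A x :=
    fun ε hε => hA.neg_sq_sum_le_mul_quadForm hm (fun j => Real.sqrt_pos.2 (by linarith [hD0 j]))
      (fun j => by rw [Real.sq_sqrt (by linarith [hD0 j])]; linarith [hAD j]) x
  have hcont : Continuous fun ε : ℝ => -(∑ j, √(D j + ε) * |x j|) ^ 2 := by fun_prop
  have hlim := (hcont.tendsto 0).mono_left (nhdsWithin_le_nhds (s := Set.Ioi 0))
  simpa using le_of_tendsto hlim (eventually_nhdsWithin_of_forall hpos)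

end SparsePosSemidef

theorem transfer_lemma_general {d : ℕ} (Sighat Sig : Matrix (Fin d) (Fin d) ℝ)
    (η : ℝ)
    (m : ℕ) (hm2 : 2 ≤ m)
    (hSRC : ∀ v : Fin d → ℝ, l0norm v ≤ m → (1 - η) * quadForm Sig v ≤ quadForm Sighat v)
    (D : Fin d → ℝ) (hD0 : ∀ j, 0 ≤ D j)
    (hDlb : ∀ j, Sighat j j - (1 - η) * Sig j j ≤ D j) :
    ∀ x : Fin d → ℝ,
      (1 - η) * quadForm Sig x - (∑ j, Real.sqrt (D j) * |x j|) ^ 2 / ((m : ℝ) - 1)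
        ≤ quadForm Sighat x := by
  intro x
  have hsparse : SparsePosSemidef m (Sighat - (1 - η) • Sig) := fun v hv => by
    rw [quadForm_sub_smul]
    linarith [hSRC v hv]
  have hbound := hsparse.neg_sq_sum_sqrt_le_mul_quadForm (by omega) hD0 (by simpa using hDlb) x
  have hm1 : (0 : ℝ) < m - 1 := by
    have : (2 : ℝ) ≤ m := by exact_mod_cast hm2
    linarith
  rw [quadForm_sub_smul] at hbound
  have hdiv : (1 - η) * quadForm Sig x - quadForm Sighat x ≤
      (∑ j, Real.sqrt (D j) * |x j|) ^ 2 / ((m : ℝ) - 1) := by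
    rw [le_div_iff₀ hm1]
    linarith
  linarith

/-- Transfer lemma: a sparse Riesz lower bound transfers to all vectors up to an
ℓ₁ correction term. Here `D` records the diagonal entries of the diagonal matrix,
and `‖D^{1/2}x‖₁ = ∑ j, √(D j) * |x j|`. -/
theorem transfer_lemma {d : ℕ} (Sighat Sig : Matrix (Fin d) (Fin d) ℝ)
    (hSighat : Sighat.PosSemidef) (hSig : Sig.PosSemidef)
    (η : ℝ) (hη0 : 0 < η) (hη1 : η < 1)
    (m : ℕ) (hm2 : 2 ≤ m) (hmd : m ≤ d)
    (hSRC : ∀ v : Fin d → ℝ, l0norm v ≤ m → (1 - η) * quadForm Sig v ≤ quadForm Sighat v)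
    (D : Fin d → ℝ) (hD0 : ∀ j, 0 ≤ D j)
    (hDlb : ∀ j, Sighat j j - (1 - η) * Sig j j ≤ D j) :
    ∀ x : Fin d → ℝ,
      (1 - η) * quadForm Sig x - (∑ j, Real.sqrt (D j) * |x j|) ^ 2 / ((m : ℝ) - 1)
        ≤ quadForm Sighat x :=
  transfer_lemma_general Sighat Sig η m hm2 hSRC D hD0 hDlb
end

section
/- There exists a universal constant c > 0 with the following property. Let Z₁,…,Z_t be i.i.d. nonnegative real random variables such that (i) the sub-exponential norm ‖Z₁‖_{ψ₁} := inf{λ > 0 : E exp(Z₁/λ) ≤ 2} is at most b for some b > 0, and (ii) P(Z₁ ≤ h) ≤ q·h for every h > 0, for some q > 0. Then, with κ := min{1/(4qb), 1/2}, P((1/t)·Σ_{τ=1}^t Z_τ ≤ 1/(4q)) ≤ 2·exp(−c·κ²·t). -/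
/-!
A small-ball bound `P(Z ≤ h) ≤ q h` makes the Laplace transform of `Z` small: by the layer-cake
formula, `E exp(-λZ) = ∫₀¹ P(Z < -log s / λ) ds ≤ (q/λ) ∫₀¹ -log s ds = q/λ`. Taking `λ = 4q`,
Chernoff's bound for the lower tail of the i.i.d. sum gives
`P(∑ Z ≤ t/(4q)) ≤ eᵗ 4⁻ᵗ ≤ exp(-t/8) ≤ 2 exp(-κ² t/2)`, as `e^(9/8) ≤ 4` and `κ ≤ 1/2`.
-/

open MeasureTheory ProbabilityTheory Real

/-- Sub-exponential (ψ₁) Orlicz norm: `inf{λ > 0 : E exp(|Z|/λ) ≤ 2}`. -/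
noncomputable def psi1Norm {Ω : Type*} [MeasurableSpace Ω] (μ : Measure Ω) (Z : Ω → ℝ) : ℝ :=
  sInf {l : ℝ | 0 < l ∧ ∫ ω, Real.exp (|Z ω| / l) ∂μ ≤ 2}

open Set

lemma lintegral_ofReal_neg_log_Ioi_zero :
    ∫⁻ s in Ioi (0 : ℝ), ENNReal.ofReal (-log s) = 1 := by
  have hzero : ∫⁻ s in Ioi (1 : ℝ), ENNReal.ofReal (-log s) = 0 :=
    setLIntegral_eq_zero measurableSet_Ioi fun s hs ↦
      ENNReal.ofReal_eq_zero.mpr (neg_nonpos.mpr (log_nonneg hs.le))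
  have hint : IntegrableOn (fun s ↦ -log s) (Ioc 0 1) :=
    (intervalIntegral.intervalIntegrable_log' (a := 0) (b := 1)).1.neg
  have hnonneg : 0 ≤ᵐ[volume.restrict (Ioc (0 : ℝ) 1)] fun s ↦ -log s :=
    (ae_restrict_iff' measurableSet_Ioc).mpr <| .of_forall fun s hs ↦
      neg_nonneg.mpr (log_nonpos hs.1.le hs.2)
  rw [← Ioc_union_Ioi_eq_Ioi zero_le_one,
    lintegral_union measurableSet_Ioi (Ioc_disjoint_Ioi le_rfl), hzero, add_zero,
    ← ofReal_integral_eq_lintegral_ofReal hint hnonneg, integral_neg,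
    ← intervalIntegral.integral_of_le zero_le_one, integral_log]
  simp

lemma measure_lt_le_ofReal_mul_of_ae_nonneg {Ω : Type*} [MeasurableSpace Ω] {μ : Measure Ω}
    {X : Ω → ℝ} {q : ℝ} (hX : 0 ≤ᵐ[μ] X)
    (hsmall : ∀ h : ℝ, 0 < h → μ {ω | X ω ≤ h} ≤ ENNReal.ofReal (q * h)) (h : ℝ) :
    μ {ω | X ω < h} ≤ ENNReal.ofReal (q * h) := by
  rcases le_or_gt h 0 with hh | hh
  · have hnull : μ {ω | X ω < h} = 0 :=
      measure_mono_null (fun ω (hω : X ω < h) ↦ (not_le.mpr (hω.trans_le hh) : ¬ 0 ≤ X ω))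
        (ae_iff.mp hX)
    simp [hnull]
  · exact (measure_mono fun ω (hω : X ω < h) ↦ hω.le).trans (hsmall h hh)

lemma mgf_neg_le_of_measure_lt_le {Ω : Type*} [MeasurableSpace Ω] {μ : Measure Ω}
    {X : Ω → ℝ} {q l : ℝ} (hX : AEMeasurable X μ) (hq : 0 ≤ q) (hl : 0 < l)
    (hsmall : ∀ h : ℝ, μ {ω | X ω < h} ≤ ENNReal.ofReal (q * h)) :
    mgf X μ (-l) ≤ q / l := by
  have hexp_nonneg : 0 ≤ᵐ[μ] fun ω ↦ exp (-l * X ω) := .of_forall fun ω ↦ (exp_pos _).le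
  have hexp_meas : AEMeasurable (fun ω ↦ exp (-l * X ω)) μ := (hX.const_mul _).exp
  have hlayer : ∀ s ∈ Ioi (0 : ℝ), μ {ω | s < exp (-l * X ω)} ≤
      ENNReal.ofReal (q / l) * ENNReal.ofReal (-log s) := by
    intro s hs
    have hset : {ω | s < exp (-l * X ω)} = {ω | X ω < -log s / l} := by
      ext ω
      simp only [mem_ofPred_eq, ← log_lt_iff_lt_exp hs, lt_div_iff₀ hl]
      constructor <;> intro h <;> linarith
    rw [hset, ← ENNReal.ofReal_mul (div_nonneg hq hl.le)]
    convert hsmall (-log s / l) using 2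
    ring
  have hlint : ∫⁻ ω, ENNReal.ofReal (exp (-l * X ω)) ∂μ ≤ ENNReal.ofReal (q / l) :=
    calc ∫⁻ ω, ENNReal.ofReal (exp (-l * X ω)) ∂μ
        = ∫⁻ s in Ioi 0, μ {ω | s < exp (-l * X ω)} :=
          lintegral_eq_lintegral_meas_lt μ hexp_nonneg hexp_meas
      _ ≤ ∫⁻ s in Ioi 0, ENNReal.ofReal (q / l) * ENNReal.ofReal (-log s) :=
          setLIntegral_mono' measurableSet_Ioi hlayer
      _ = ENNReal.ofReal (q / l) := by
          rw [lintegral_const_mul' _ _ ENNReal.ofReal_ne_top, lintegral_ofReal_neg_log_Ioi_zero,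
            mul_one]
  rw [mgf, integral_eq_lintegral_of_nonneg_ae hexp_nonneg hexp_meas.aestronglyMeasurable]
  exact ENNReal.toReal_le_of_le_ofReal (div_nonneg hq hl.le) hlint

lemma measureReal_sum_le_le_of_mgf_neg_le {Ω ι : Type*} [MeasurableSpace Ω] [Fintype ι]
    {μ : Measure Ω} {Z : ι → Ω → ℝ} {l m : ℝ} (hmeas : ∀ i, Measurable (Z i))
    (hindep : iIndepFun Z μ) (hnonneg : ∀ i, 0 ≤ᵐ[μ] Z i) (hl : 0 ≤ l)
    (hmgf : ∀ i, mgf (Z i) μ (-l) ≤ m) (ε : ℝ) :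
    μ.real {ω | ∑ i, Z i ω ≤ ε} ≤ exp (l * ε) * m ^ Fintype.card ι := by
  have := hindep.isProbabilityMeasure
  have hint : ∀ i ∈ Finset.univ, Integrable (fun ω ↦ exp (-l * Z i ω)) μ := fun i _ ↦
    (integrable_const 1).mono' ((hmeas i).const_mul _).exp.aestronglyMeasurable <|
      (hnonneg i).mono fun ω hω ↦ by
        rw [norm_of_nonneg (exp_pos _).le, exp_le_one_iff]
        exact mul_nonpos_of_nonpos_of_nonneg (neg_nonpos.mpr hl) hω
  have hchernoff := measure_le_le_exp_mul_mgf ε (neg_nonpos.mpr hl)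
    (hindep.integrable_exp_mul_sum hmeas hint)
  simp only [Finset.sum_apply, neg_neg, hindep.mgf_sum hmeas] at hchernoff
  refine hchernoff.trans (mul_le_mul_of_nonneg_left ?_ (exp_pos _).le)
  calc ∏ i, mgf (Z i) μ (-l) ≤ ∏ _i : ι, m :=
        Finset.prod_le_prod (fun i _ ↦ mgf_nonneg) (fun i _ ↦ hmgf i)
    _ = m ^ Fintype.card ι := by rw [Finset.prod_const, Finset.card_univ]

lemma exp_mul_inv_four_pow_le (n : ℕ) : exp n * (1 / 4) ^ n ≤ exp (-(n / 8)) := by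
  have hbase : exp 1 * (1 / 4) ≤ exp (-(1 / 8)) := by
    have hlog : (9 / 8 : ℝ) ≤ log 4 := by
      rw [show (4 : ℝ) = 2 ^ 2 by norm_num, log_pow]
      linarith [log_two_gt_d9]
    have h98 : exp (9 / 8) ≤ 4 := by
      rwa [← exp_le_exp, exp_log (by norm_num)] at hlog
    have hsplit : exp 1 = exp (9 / 8) * exp (-(1 / 8)) := by rw [← exp_add]; norm_num
    rw [hsplit]
    nlinarith [exp_pos (-(1 / 8))]
  calc exp n * (1 / 4) ^ n = (exp 1 * (1 / 4)) ^ n := by rw [mul_pow, ← exp_nat_mul, mul_one]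
    _ ≤ exp (-(1 / 8)) ^ n := pow_le_pow_left₀ (by positivity) hbase n
    _ = exp (-(n / 8)) := by rw [← exp_nat_mul]; ring_nf

/-- Bernstein-type concentration below the mean for i.i.d. nonnegative
sub-exponential random variables satisfying a linear anti-concentration bound. -/
theorem subexp_anticoncentration_lower_tail :
    ∃ c : ℝ, 0 < c ∧
      ∀ (Ω : Type) (_ : MeasurableSpace Ω) (μ : Measure Ω), IsProbabilityMeasure μ →
      ∀ (t : ℕ) (ht : 1 ≤ t) (Z : Fin t → Ω → ℝ),
        (∀ τ, Measurable (Z τ)) →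
        iIndepFun Z μ →
        (∀ τ τ' : Fin t, IdentDistrib (Z τ) (Z τ') μ μ) →
        (∀ τ, ∀ᵐ ω ∂μ, 0 ≤ Z τ ω) →
        ∀ (b q : ℝ), 0 < b → 0 < q →
        psi1Norm μ (Z ⟨0, ht⟩) ≤ b →
        (∀ h : ℝ, 0 < h → μ {ω | Z ⟨0, ht⟩ ω ≤ h} ≤ ENNReal.ofReal (q * h)) →
        μ {ω | (1 / (t : ℝ)) * ∑ τ, Z τ ω ≤ 1 / (4 * q)} ≤
          ENNReal.ofReal
            (2 * Real.exp (-(c * (min (1 / (4 * q * b)) (1 / 2)) ^ 2 * t))) := by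
  refine ⟨1 / 2, by norm_num, ?_⟩
  intro Ω _ μ _ t ht Z hmeas hindep hident hnonneg b q _ hq _ hsmall
  set κ := min (1 / (4 * q * b)) (1 / 2)
  have ht_pos : (0 : ℝ) < t := by exact_mod_cast ht
  have hmgf : ∀ τ, mgf (Z τ) μ (-(4 * q)) ≤ 1 / 4 := fun τ ↦ by
    rw [mgf_congr_identDistrib (hident τ ⟨0, ht⟩)]
    refine (mgf_neg_le_of_measure_lt_le (hmeas _).aemeasurable hq.le (by positivity)
      (measure_lt_le_ofReal_mul_of_ae_nonneg (hnonneg _) hsmall)).trans_eq ?_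
    field_simp
  have hevent : {ω | (1 / (t : ℝ)) * ∑ τ, Z τ ω ≤ 1 / (4 * q)} =
      {ω | ∑ τ, Z τ ω ≤ t / (4 * q)} := by
    ext ω
    simp only [mem_ofPred_eq, inv_mul_le_iff₀ ht_pos, div_eq_mul_inv, one_mul]
  have hκ : κ ^ 2 ≤ 1 / 4 := by
    have hκ_nonneg : 0 ≤ κ := le_min (by positivity) (by norm_num)
    have hκ_le : κ ≤ 1 / 2 := min_le_right _ _
    nlinarith
  rw [hevent, ENNReal.le_ofReal_iff_toReal_le (measure_ne_top _ _) (by positivity)]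
  calc μ.real {ω | ∑ τ, Z τ ω ≤ t / (4 * q)}
      ≤ exp (4 * q * (t / (4 * q))) * (1 / 4) ^ t := by
        simpa using measureReal_sum_le_le_of_mgf_neg_le hmeas hindep hnonneg (by positivity)
          hmgf (t / (4 * q))
    _ ≤ exp (-(t / 8)) := by
        rw [mul_div_cancel₀ _ (by positivity)]
        exact exp_mul_inv_four_pow_le t
    _ ≤ 2 * exp (-(1 / 2 * κ ^ 2 * t)) := by
        have : exp (-(t / 8)) ≤ exp (-(1 / 2 * κ ^ 2 * t)) := exp_le_exp.mpr (by nlinarith)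
        linarith [exp_pos (-(1 / 2 * κ ^ 2 * t))]
end

section
/- Let t, d be positive integers, X ∈ ℝ^{t×d}, and β*, β ∈ ℝ^d with S* = supp(β*) nonempty, |S*| = s*. Let λ, λ̄ > 0 and suppose φ := φ_comp(S*;X) > 0. Then λ‖β*‖₁ + λ̄‖β − β*‖₁ ≤ λ‖β‖₁ + (λ̄ − 3λ/4)·‖β − β*‖₁ + (1/2)·‖X(β − β*)‖₂² + 2·s*·λ²/(t·φ²). -/
open Real

/-- Restricted cone C_α(S): `‖v_{S^c}‖₁ ≤ α‖v_S‖₁` and `v_S ≠ 0`. -/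
def restrictedCone {d : ℕ} (α : ℝ) (S : Finset (Fin d)) : Set (Fin d → ℝ) :=
  {v | (∑ j ∈ Sᶜ, |v j|) ≤ α * ∑ j ∈ S, |v j| ∧ ∃ j ∈ S, v j ≠ 0}

/-- Compatibility number φ_comp(S; X) = inf{‖Xδ‖₂·|S|^{1/2}/(t^{1/2}·‖δ‖₁) : δ ∈ C₇(S)}. -/
noncomputable def phiComp {t d : ℕ} (S : Finset (Fin d)) (X : Matrix (Fin t) (Fin d) ℝ) : ℝ :=
  sInf ((fun δ => Real.sqrt (∑ i, (X.mulVec δ i) ^ 2) * Real.sqrt (S.card) /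
      (Real.sqrt t * ∑ j, |δ j|)) '' restrictedCone 7 S)

/-- AM–GM auxiliary: if `z² ≤ 4xy` with everything nonnegative, then `z ≤ x + y`. -/
lemma amgm_aux' (z x y : ℝ) (hz : 0 ≤ z) (hx : 0 ≤ x) (hy : 0 ≤ y)
    (h : z ^ 2 ≤ 4 * x * y) : z ≤ x + y := by
  nlinarith [sq_nonneg (x - y), sq_nonneg (x + y - z), sq_nonneg (x + y + z)]

/-- key inequality decomposing the penalized ℓ₁ terms via the
compatibility number. -/
theorem penalized_l1_decomposition (t d : ℕ) (ht : 1 ≤ t) (hd : 1 ≤ d)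
    (X : Matrix (Fin t) (Fin d) ℝ) (βstar β : Fin d → ℝ)
    (Sstar : Finset (Fin d)) (hSstar : ↑Sstar = {j | βstar j ≠ 0}) (hSne : Sstar.Nonempty)
    (sstar : ℕ) (hcard : Sstar.card = sstar)
    (lam lamBar : ℝ) (hlam : 0 < lam) (hlamBar : 0 < lamBar)
    (φ : ℝ) (hφ : φ = phiComp Sstar X) (hφpos : 0 < φ) :
    lam * (∑ j, |βstar j|) + lamBar * (∑ j, |β j - βstar j|) ≤
      lam * (∑ j, |β j|) + (lamBar - 3 * lam / 4) * (∑ j, |β j - βstar j|) +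
        (1 / 2) * (∑ i, (X.mulVec (β - βstar) i) ^ 2) +
        2 * sstar * lam ^ 2 / (t * φ ^ 2) := by
  have ht0 : (0:ℝ) < t := by
    have : (1:ℝ) ≤ t := by exact_mod_cast ht
    linarith
  set δ : Fin d → ℝ := β - βstar with hδdef
  have hδ : ∀ j, δ j = β j - βstar j := fun j => rfl
  set Q : ℝ := ∑ i, (X.mulVec δ i) ^ 2 with hQdef
  have hQ0 : 0 ≤ Q := Finset.sum_nonneg fun i _ => sq_nonneg _
  set A : ℝ := ∑ j ∈ Sstar, |δ j| with hA
  set B : ℝ := ∑ j ∈ Sstarᶜ, |δ j| with hB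
  have hA0 : 0 ≤ A := Finset.sum_nonneg fun j _ => abs_nonneg _
  have hB0 : 0 ≤ B := Finset.sum_nonneg fun j _ => abs_nonneg _
  have hsum : (∑ j, |δ j|) = A + B := (Finset.sum_add_sum_compl Sstar fun j => |δ j|).symm
  have hmemS : ∀ j, j ∈ Sstar ↔ βstar j ≠ 0 := by
    intro j
    rw [← Finset.mem_coe, hSstar]
    rfl
  have hsupp : ∀ j, j ∉ Sstar → βstar j = 0 := by
    intro j hj
    by_contra h
    exact hj ((hmemS j).mpr h)
  -- sum decompositions
  have h1 : (∑ j, |βstar j|) = ∑ j ∈ Sstar, |βstar j| := by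
    rw [← Finset.sum_add_sum_compl Sstar fun j => |βstar j|]
    have : (∑ j ∈ Sstarᶜ, |βstar j|) = 0 :=
      Finset.sum_eq_zero fun j hj => by rw [hsupp j (Finset.mem_compl.mp hj), abs_zero]
    rw [this, add_zero]
  have h2 : (∑ j, |β j|) = (∑ j ∈ Sstar, |β j|) + B := by
    rw [← Finset.sum_add_sum_compl Sstar fun j => |β j|]
    congr 1
    apply Finset.sum_congr rfl
    intro j hj
    rw [hδ, hsupp j (Finset.mem_compl.mp hj), sub_zero]
  have h3 : (∑ j ∈ Sstar, |βstar j|) ≤ (∑ j ∈ Sstar, |β j|) + A := by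
    rw [hA, ← Finset.sum_add_distrib]
    apply Finset.sum_le_sum
    intro j _
    have h := abs_sub_abs_le_abs_sub (βstar j) (β j)
    rw [abs_sub_comm] at h
    rw [hδ]
    linarith
  have bound1 : (∑ j, |βstar j|) - (∑ j, |β j|) ≤ A - B := by
    rw [h1, h2]; linarith
  have hsum' : (∑ j, |β j - βstar j|) = A + B := by
    simp_rw [← hδ]; exact hsum
  clear_value A B Q δ
  have htφ : (0:ℝ) < (t:ℝ) * φ ^ 2 := by positivity
  have hDpos : (0:ℝ) ≤ 2 * sstar * lam ^ 2 / ((t:ℝ) * φ ^ 2) := by positivity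
  -- key inequality
  have key : 7 / 4 * lam * A - lam / 4 * B ≤ Q / 2 + 2 * sstar * lam ^ 2 / ((t:ℝ) * φ ^ 2) := by
    by_cases hcase : B ≤ 7 * A
    · by_cases hA' : A = 0
      · have hB7 : B ≤ 0 := by rw [hA'] at hcase; linarith
        have hBz : B = 0 := le_antisymm hB7 hB0
        rw [hA', hBz]
        linarith [hQ0, hDpos]
      · have hApos : 0 < A := lt_of_le_of_ne hA0 (Ne.symm hA')
        have hex : ∃ j ∈ Sstar, δ j ≠ 0 := by
          by_contra h
          push_neg at h
          exact hA' (hA.trans (Finset.sum_eq_zero fun j hj => by rw [h j hj, abs_zero]))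
        have hcone : δ ∈ restrictedCone 7 Sstar := ⟨by rw [← hA, ← hB]; exact hcase, hex⟩
        have hbdd : BddBelow ((fun v => Real.sqrt (∑ i, (X.mulVec v i) ^ 2) *
            Real.sqrt (Sstar.card) / (Real.sqrt t * ∑ j, |v j|)) '' restrictedCone 7 Sstar) := by
          refine ⟨0, ?_⟩
          rintro x ⟨v, -, rfl⟩
          have hn : (0:ℝ) ≤ Real.sqrt (∑ i, (X.mulVec v i) ^ 2) * Real.sqrt (Sstar.card) :=
            mul_nonneg (Real.sqrt_nonneg _) (Real.sqrt_nonneg _)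
          have hdn : (0:ℝ) ≤ Real.sqrt t * ∑ j, |v j| :=
            mul_nonneg (Real.sqrt_nonneg _) (Finset.sum_nonneg fun j _ => abs_nonneg _)
          exact div_nonneg hn hdn
        have hle : φ ≤ Real.sqrt Q * Real.sqrt (Sstar.card) / (Real.sqrt t * (A + B)) := by
          have h := csInf_le hbdd ⟨δ, hcone, rfl⟩
          simp only [← hQdef, hsum] at h
          rw [hφ]
          exact h
        have hABpos : 0 < A + B := by linarith
        have hden : 0 < Real.sqrt t * (A + B) :=
          mul_pos (Real.sqrt_pos.mpr ht0) hABpos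
        have hkey1 : φ * (Real.sqrt t * (A + B)) ≤ Real.sqrt Q * Real.sqrt (Sstar.card) :=
          (le_div_iff₀ hden).mp hle
        have hkey2 : φ ^ 2 * ((t:ℝ) * (A + B) ^ 2) ≤ Q * sstar := by
          have hl : 0 ≤ φ * (Real.sqrt t * (A + B)) := le_of_lt (mul_pos hφpos hden)
          have hsq := mul_self_le_mul_self hl hkey1
          have e1 : Real.sqrt t * Real.sqrt t = (t:ℝ) := Real.mul_self_sqrt ht0.le
          have e2 : Real.sqrt Q * Real.sqrt Q = Q := Real.mul_self_sqrt hQ0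
          have e3 : Real.sqrt (Sstar.card) * Real.sqrt (Sstar.card) = (sstar:ℝ) := by
            rw [Real.mul_self_sqrt (by positivity)]
            exact_mod_cast hcard
          have eL : φ * (Real.sqrt t * (A + B)) * (φ * (Real.sqrt t * (A + B))) =
              φ ^ 2 * ((t:ℝ) * (A + B) ^ 2) := by
            linear_combination (φ ^ 2 * (A + B) ^ 2) * e1
          have eR : Real.sqrt Q * Real.sqrt (Sstar.card) *
              (Real.sqrt Q * Real.sqrt (Sstar.card)) = Q * (sstar:ℝ) := by
            linear_combination (Real.sqrt (Sstar.card) * Real.sqrt (Sstar.card)) * e2 + Q * e3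
          rw [← eL, ← eR]
          exact hsq
        -- AM–GM step, all at the polynomial level
        have hkey2m : 4 * lam ^ 2 * ((t:ℝ) * φ ^ 2) * (φ ^ 2 * ((t:ℝ) * (A + B) ^ 2)) ≤
            4 * lam ^ 2 * ((t:ℝ) * φ ^ 2) * (Q * sstar) :=
          mul_le_mul_of_nonneg_left hkey2 (by positivity)
        have hz2 : (2 * lam * (A + B) * ((t:ℝ) * φ ^ 2)) ^ 2 ≤
            4 * (Q * ((t:ℝ) * φ ^ 2) / 2) * (2 * sstar * lam ^ 2) := by
          nlinarith [hkey2m]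
        have haux : 2 * lam * (A + B) * ((t:ℝ) * φ ^ 2) ≤
            Q * ((t:ℝ) * φ ^ 2) / 2 + 2 * sstar * lam ^ 2 := by
          refine amgm_aux' _ _ _ ?_ ?_ (by positivity) hz2
          · have := mul_nonneg (mul_nonneg (by linarith : (0:ℝ) ≤ 2 * lam)
              hABpos.le) htφ.le
            linarith
          · have := mul_nonneg hQ0 htφ.le
            linarith
        have hnn : (0:ℝ) ≤ lam * ((t:ℝ) * φ ^ 2) * (A / 4 + 9 * B / 4) :=
          mul_nonneg (mul_nonneg hlam.le htφ.le) (by linarith)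
        have hpoly : (7 / 4 * lam * A - lam / 4 * B - Q / 2) * ((t:ℝ) * φ ^ 2) ≤
            2 * sstar * lam ^ 2 := by
          linarith [haux, hnn]
        have hfin := (le_div_iff₀ htφ).mpr hpoly
        linarith
    · push_neg at hcase
      have hm := mul_pos hlam (by linarith : (0:ℝ) < B - 7 * A)
      linarith [hm, hQ0, hDpos]
  -- conclude
  rw [hsum']
  linarith [mul_le_mul_of_nonneg_left bound1 hlam.le, key]
end
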